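/- (Borel–Bernstein for θ-expansions, divergence part) Let φ : ℕ₊ → (0,∞) be a function with Σ_{n≥1} 1/φ(n) = ∞. Then the set A_φ = {x ∈ Ω : a_n(x) > φ(n) for infinitely many n} has normalized Lebesgue measure λ_θ(A_φ) = 1. -/

import Mathlib

noncomputable section
open MeasureTheory Filter Set

namespace Theta

/-- θ = 1/√m -/
def th (m : ℕ) : ℝ := 1 / Real.sqrt m

/-- The θ-expansion map T_θ on [0,θ]. -/
def T (m : ℕ) (x : ℝ) : ℝ := if x = 0 then 0 else 1 / x - th m * ⌊1 / (x * th m)⌋₊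

/-- The n-th digit a_n(x) (n ≥ 1), a_n(x) = a_1(T_θ^{n-1} x) with a_1(x) = ⌊1/(xθ)⌋. -/
def a (m n : ℕ) (x : ℝ) : ℕ := ⌊1 / ((T m)^[n - 1] x * th m)⌋₊

/-- Ω: the irrationals in (0,θ). -/
def Omega (m : ℕ) : Set ℝ := {x | x ∈ Set.Ioo 0 (th m) ∧ Irrational x}

/-- Convergent numerators, shifted: `p m x (n+1)` is p_n(x), `p m x 0` is p_{-1} = 1. -/
def p (m : ℕ) (x : ℝ) : ℕ → ℝ
  | 0 => 1
  | 1 => 0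
  | n + 2 => (a m (n + 1) x) * th m * p m x (n + 1) + p m x n

/-- Convergent denominators, shifted: `q m x (n+1)` is q_n(x), `q m x 0` is q_{-1} = 0. -/
def q (m : ℕ) (x : ℝ) : ℕ → ℝ
  | 0 => 0
  | 1 => 1
  | n + 2 => (a m (n + 1) x) * th m * q m x (n + 1) + q m x n

/-- Normalized Lebesgue measure on [0,θ]: λ_θ(A) = Leb(A)/θ (as a real number). -/
def lam (m : ℕ) (A : Set ℝ) : ℝ := (volume A).toReal / th m

/-!
Every `x` whose orbit stays in `(0, θ)` equals `branch w (T^[n] x)`, where `w` is the word of its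
first `n` digits and the inverse branch `branch w` is the Möbius map of a product of digit matrices
`!![0, 1; 1, k θ]`: its entries are nonnegative and its determinant is `±1`, so its derivative
`±1 / (C z + D) ^ 2` decreases in absolute value. As `a (n + 1) x ≤ K` means
`T^[n] x > 1 / ((K + 1) θ)`, inside each rank-`n` cylinder the digit `a (n + 1)` is at most `K`
on at most the proportion `1 - m / (K + 1)` of the cylinder. Summing over cylinders and iterating,
the points with `a (j + 1) ≤ φ (j + 1)` for all `N ≤ j < n` have measure at most
`θ ∏ (1 - m / (⌊φ (j + 1)⌋ + 1)) ≤ θ exp (-∑ m / (⌊φ (j + 1)⌋ + 1))`, which tends to `0` since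
`∑ 1 / φ` diverges. The points whose orbit leaves `(0, θ)` and the rationals form countable sets.
-/

open scoped ENNReal

variable {m : ℕ}

lemma th_pos (hm : 0 < m) : 0 < th m := by
  unfold th; positivity

lemma natCast_mul_th_mul_th (hm : 0 < m) : (m : ℝ) * (th m * th m) = 1 := by
  have : (0 : ℝ) < m := by exact_mod_cast hm
  rw [th, div_mul_div_comm, one_mul, Real.mul_self_sqrt this.le, mul_one_div_cancel this.ne']

lemma a_one (x : ℝ) : a m 1 x = ⌊1 / (x * th m)⌋₊ := rfl

lemma a_succ {n : ℕ} (hn : n ≠ 0) (x : ℝ) : a m (n + 1) x = a m n (T m x) := by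
  obtain ⟨k, rfl⟩ := Nat.exists_eq_succ_of_ne_zero hn
  change a m 1 ((T m)^[k + 1] x) = a m 1 ((T m)^[k] (T m x))
  rw [Function.iterate_succ_apply]

lemma T_of_pos {x : ℝ} (hx : 0 < x) : T m x = 1 / x - th m * a m 1 x := by
  rw [T, if_neg hx.ne', a_one]

lemma le_a_one (hm : 0 < m) {x : ℝ} (hx : x ∈ Ioo 0 (th m)) : m ≤ a m 1 x := by
  have hθ := th_pos hm
  rw [a_one, Nat.le_floor_iff (by have := hx.1; positivity), le_div_iff₀ (by nlinarith [hx.1])]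
  nlinarith [hx.2, natCast_mul_th_mul_th hm]

lemma T_mem_Ico (hm : 0 < m) {x : ℝ} (hx : x ∈ Ioo 0 (th m)) : T m x ∈ Ico 0 (th m) := by
  have hθ := th_pos hm
  have hy : 0 < 1 / (x * th m) := by have := hx.1; positivity
  have hθy : th m * (1 / (x * th m)) = 1 / x := by field_simp
  rw [T_of_pos hx.1, a_one]
  constructor
  · nlinarith [Nat.floor_le hy.le]
  · nlinarith [Nat.lt_floor_add_one (1 / (x * th m))]

lemma one_div_a_one_mul_add_T {x : ℝ} (hx : 0 < x) :
    1 / ((a m 1 x : ℝ) * th m + T m x) = x := by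
  rw [T_of_pos hx, mul_comm, add_sub_cancel, one_div_one_div]

section InverseBranch

variable {k : ℕ} {z : ℝ}

lemma one_div_mem_Ioo (hm : 0 < m) (hk : m ≤ k) (hz : z ∈ Ioo 0 (th m)) :
    1 / ((k : ℝ) * th m + z) ∈ Ioo 0 (th m) := by
  have hθ := th_pos hm
  have hk' : (m : ℝ) ≤ k := by exact_mod_cast hk
  have hd : 0 < (k : ℝ) * th m + z := by nlinarith [hz.1]
  refine ⟨by positivity, ?_⟩
  rw [div_lt_iff₀ hd]
  nlinarith [natCast_mul_th_mul_th hm, hz.1]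

lemma a_one_one_div (hm : 0 < m) (hk : m ≤ k) (hz : z ∈ Ioo 0 (th m)) :
    a m 1 (1 / ((k : ℝ) * th m + z)) = k := by
  have hθ := th_pos hm
  have hd : 0 < (k : ℝ) * th m + z := by
    have : (0 : ℝ) < k := by exact_mod_cast hm.trans_le hk
    nlinarith [hz.1]
  have hz' : z / th m ∈ Ico 0 1 := ⟨div_nonneg hz.1.le hθ.le, (div_lt_one hθ).2 hz.2⟩
  have : 1 / (1 / ((k : ℝ) * th m + z) * th m) = z / th m + k := by
    field_simp
    ring
  rw [a_one, this, Nat.floor_add_natCast hz'.1, Nat.floor_eq_zero.2 hz'.2, zero_add]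

lemma T_one_div (hm : 0 < m) (hk : m ≤ k) (hz : z ∈ Ioo 0 (th m)) :
    T m (1 / ((k : ℝ) * th m + z)) = z := by
  rw [T_of_pos (one_div_mem_Ioo hm hk hz).1, a_one_one_div hm hk hz, one_div_one_div]
  ring

end InverseBranch

def nonEscaping (m : ℕ) : Set ℝ := {x | ∀ n : ℕ, (T m)^[n] x ∈ Ioo 0 (th m)}

def digits (m n : ℕ) (x : ℝ) : Fin n → ℕ := fun i => a m (i + 1) x

/-- `branch m n w` is the inverse of `(T m)^[n]` on the points whose first `n` digits are `w`. -/
def branch (m : ℕ) : (n : ℕ) → (Fin n → ℕ) → ℝ → ℝ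
  | 0, _, z => z
  | n + 1, w, z => 1 / (w 0 * th m + branch m n (Fin.tail w) z)

section Branch

variable {n : ℕ} {x z : ℝ}

lemma nonEscaping_subset_Ioo : nonEscaping m ⊆ Ioo 0 (th m) := fun _ hx => hx 0

lemma le_a_of_mem_nonEscaping (hm : 0 < m) (hx : x ∈ nonEscaping m) (n : ℕ) :
    m ≤ a m (n + 1) x :=
  le_a_one hm (hx n)

lemma digits_succ (n : ℕ) (x : ℝ) :
    digits m (n + 1) x = Fin.cons (a m 1 x) (digits m n (T m x)) := by
  ext i
  refine Fin.cases rfl (fun j => ?_) i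
  simp only [digits, Fin.cons_succ, Fin.val_succ]
  exact a_succ (Nat.succ_ne_zero j) x

lemma branch_mem_Ioo (hm : 0 < m) {w : Fin n → ℕ} (hw : ∀ i, m ≤ w i)
    (hz : z ∈ Ioo 0 (th m)) : branch m n w z ∈ Ioo 0 (th m) := by
  induction n with
  | zero => exact hz
  | succ n ih => exact one_div_mem_Ioo hm (hw 0) (ih fun i => hw i.succ)

lemma digits_branch (hm : 0 < m) {w : Fin n → ℕ} (hw : ∀ i, m ≤ w i)
    (hz : z ∈ Ioo 0 (th m)) : digits m n (branch m n w z) = w := by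
  induction n with
  | zero => exact Subsingleton.elim _ _
  | succ n ih =>
    have hmem : branch m n (Fin.tail w) z ∈ Ioo 0 (th m) :=
      branch_mem_Ioo hm (fun i => hw i.succ) hz
    rw [digits_succ, branch, a_one_one_div hm (hw 0) hmem, T_one_div hm (hw 0) hmem,
      ih (w := Fin.tail w) fun i => hw i.succ, Fin.cons_self_tail]

lemma branch_digits (hx : ∀ j < n, (T m)^[j] x ∈ Ioo 0 (th m)) :
    branch m n (digits m n x) ((T m)^[n] x) = x := by
  induction n generalizing x with
  | zero => rfl
  | succ n ih =>
    have hTx : ∀ j < n, (T m)^[j] (T m x) ∈ Ioo 0 (th m) := fun j hj => by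
      simpa only [Function.iterate_succ_apply] using hx (j + 1) (by omega)
    rw [branch, digits_succ, Fin.cons_zero, Fin.tail_cons, Function.iterate_succ_apply, ih hTx,
      one_div_a_one_mul_add_T (x := x) (hx 0 n.succ_pos).1]

lemma branch_digits_of_mem_nonEscaping (hx : x ∈ nonEscaping m) (n : ℕ) :
    branch m n (digits m n x) ((T m)^[n] x) = x :=
  branch_digits fun j _ => hx j

/-- Since `T` maps `(0, θ)` into `[0, θ)`, an orbit leaving `(0, θ)` does so by hitting `0`. -/
lemma Ioo_diff_nonEscaping_subset (hm : 0 < m) :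
    Ioo 0 (th m) \ nonEscaping m ⊆ ⋃ n, range fun w : Fin n → ℕ => branch m n w 0 := by
  classical
  rintro x ⟨hx, hesc⟩
  have hex : ∃ n, (T m)^[n] x ∉ Ioo 0 (th m) := by simpa [nonEscaping] using hesc
  have hmin : ∀ j < Nat.find hex, (T m)^[j] x ∈ Ioo 0 (th m) := fun j hj =>
    not_not.1 (Nat.find_min hex hj)
  obtain ⟨n, hn⟩ := Nat.exists_eq_succ_of_ne_zero
    (fun h => Nat.find_spec hex (by rw [h]; exact hx) : Nat.find hex ≠ 0)
  have hzero : (T m)^[n + 1] x = 0 := by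
    have hIco := T_mem_Ico hm (hmin n (by omega))
    rw [← Function.iterate_succ_apply' (T m)] at hIco
    by_contra h
    exact hn ▸ Nat.find_spec hex <| ⟨lt_of_le_of_ne hIco.1 (Ne.symm h), hIco.2⟩
  refine mem_iUnion.2 ⟨n + 1, digits m (n + 1) x, ?_⟩
  rw [← hzero]
  exact branch_digits fun j hj => hmin j (hn ▸ hj)

lemma nonEscaping_ae_eq_Ioo (hm : 0 < m) : nonEscaping m =ᵐ[volume] Ioo 0 (th m) := by
  refine ae_eq_set.2 ⟨by rw [sdiff_eq_empty.2 nonEscaping_subset_Ioo, measure_empty], ?_⟩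
  refine measure_mono_null (Ioo_diff_nonEscaping_subset hm) (Countable.measure_zero ?_ _)
  exact countable_iUnion fun n => countable_range _

end Branch

def digitMatrix (m k : ℕ) : Matrix (Fin 2) (Fin 2) ℝ := !![0, 1; 1, k * th m]

/-- `branch m n w` is the Möbius transformation of this matrix. -/
def branchMatrix (m : ℕ) : (n : ℕ) → (Fin n → ℕ) → Matrix (Fin 2) (Fin 2) ℝ
  | 0, _ => 1
  | n + 1, w => digitMatrix m (w 0) * branchMatrix m n (Fin.tail w)

def branchDen (m n : ℕ) (w : Fin n → ℕ) (z : ℝ) : ℝ :=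
  branchMatrix m n w 1 0 * z + branchMatrix m n w 1 1

section BranchMatrix

variable {n : ℕ} {w : Fin n → ℕ} {s t u v z : ℝ}

lemma det_branchMatrix : (branchMatrix m n w).det = (-1) ^ n := by
  induction n with
  | zero => simp [branchMatrix]
  | succ n ih =>
    rw [branchMatrix, Matrix.det_mul, ih, digitMatrix, Matrix.det_fin_two_of, pow_succ]
    ring

lemma branchMatrix_nonneg (hm : 0 < m) (hw : ∀ i, 0 < w i) :
    0 ≤ branchMatrix m n w 0 0 ∧ 0 ≤ branchMatrix m n w 0 1 ∧
      0 ≤ branchMatrix m n w 1 0 ∧ 0 < branchMatrix m n w 1 1 := by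
  induction n with
  | zero => simp [branchMatrix]
  | succ n ih =>
    obtain ⟨h00, h01, h10, h11⟩ := ih (w := Fin.tail w) fun i => hw i.succ
    have hk : 0 < (w 0 : ℝ) * th m := mul_pos (by exact_mod_cast hw 0) (th_pos hm)
    simp only [branchMatrix, digitMatrix, Matrix.mul_apply, Fin.sum_univ_two, Matrix.of_apply,
      Matrix.cons_val', Matrix.cons_val_zero, Matrix.cons_val_one, Matrix.empty_val',
      Matrix.cons_val_fin_one]
    refine ⟨by nlinarith, by nlinarith, by nlinarith, by nlinarith⟩

lemma branchDen_pos (hm : 0 < m) (hw : ∀ i, 0 < w i) (hz : 0 ≤ z) : 0 < branchDen m n w z := by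
  obtain ⟨-, -, h10, h11⟩ := branchMatrix_nonneg hm hw
  unfold branchDen
  positivity

lemma branchDen_mono (hm : 0 < m) (hw : ∀ i, 0 < w i) (huv : u ≤ v) :
    branchDen m n w u ≤ branchDen m n w v := by
  obtain ⟨-, -, h10, -⟩ := branchMatrix_nonneg hm hw
  unfold branchDen
  gcongr

lemma branch_eq_div (hm : 0 < m) (hw : ∀ i, 0 < w i) (hz : 0 ≤ z) :
    branch m n w z =
      (branchMatrix m n w 0 0 * z + branchMatrix m n w 0 1) / branchDen m n w z := by
  induction n with
  | zero => simp [branch, branchMatrix, branchDen]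
  | succ n ih =>
    have ih' := ih (w := Fin.tail w) fun i => hw i.succ
    have hden := branchDen_pos hm (fun i => hw i.succ) hz (w := Fin.tail w)
    unfold branchDen at hden ih' ⊢
    rw [branch, ih', add_div' _ _ _ hden.ne', one_div_div]
    simp only [branchMatrix, digitMatrix, Matrix.mul_apply, Fin.sum_univ_two, Matrix.of_apply,
      Matrix.cons_val', Matrix.cons_val_zero, Matrix.cons_val_one, Matrix.empty_val',
      Matrix.cons_val_fin_one]
    congr 1 <;> ring

lemma branch_sub (hm : 0 < m) (hw : ∀ i, 0 < w i) (hu : 0 ≤ u) (hv : 0 ≤ v) :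
    branch m n w v - branch m n w u =
      (-1) ^ n * (v - u) / (branchDen m n w u * branchDen m n w v) := by
  have hdet := det_branchMatrix (m := m) (w := w)
  rw [Matrix.det_fin_two] at hdet
  have hu' := branchDen_pos hm hw hu
  have hv' := branchDen_pos hm hw hv
  rw [branch_eq_div hm hw hu, branch_eq_div hm hw hv, ← hdet, div_sub_div _ _ hv'.ne' hu'.ne']
  unfold branchDen
  congr 1 <;> ring

lemma abs_branch_sub (hm : 0 < m) (hw : ∀ i, 0 < w i) (hu : 0 ≤ u) (hv : 0 ≤ v) :
    |branch m n w v - branch m n w u| = |v - u| / (branchDen m n w u * branchDen m n w v) := by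
  rw [branch_sub hm hw hu hv, abs_div, abs_mul, abs_pow, abs_neg, abs_one, one_pow, one_mul,
    abs_of_pos (mul_pos (branchDen_pos hm hw hu) (branchDen_pos hm hw hv))]

lemma branch_mem_uIcc (hm : 0 < m) (hw : ∀ i, 0 < w i) (hu : 0 ≤ u) (hz : z ∈ Icc u v) :
    branch m n w z ∈ uIcc (branch m n w u) (branch m n w v) := by
  have hz0 : 0 ≤ z := hu.trans hz.1
  have h₁ := branch_sub hm hw hu hz0
  have h₂ := branch_sub hm hw hz0 (hz0.trans hz.2)
  have p₁ := mul_pos (branchDen_pos hm hw hu) (branchDen_pos hm hw hz0)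
  have p₂ := mul_pos (branchDen_pos hm hw hz0) (branchDen_pos hm hw (hz0.trans hz.2))
  have d₁ : 0 ≤ (z - u) / (branchDen m n w u * branchDen m n w z) :=
    div_nonneg (sub_nonneg.2 hz.1) p₁.le
  have d₂ : 0 ≤ (v - z) / (branchDen m n w z * branchDen m n w v) :=
    div_nonneg (sub_nonneg.2 hz.2) p₂.le
  rw [mul_div_assoc] at h₁ h₂
  rw [mem_uIcc]
  rcases neg_one_pow_eq_or ℝ n with h | h <;> rw [h] at h₁ h₂
  · left; constructor <;> linarith
  · right; constructor <;> linarith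

/-- Holds because `branchDen` increases: a branch contracts `[s, t]` more strongly than `[0, s]`. -/
lemma mul_abs_branch_sub_le (hm : 0 < m) (hw : ∀ i, 0 < w i) (hs : 0 ≤ s) (hst : s ≤ t) :
    t * |branch m n w t - branch m n w s| ≤ (t - s) * |branch m n w t - branch m n w 0| := by
  have ht := hs.trans hst
  rw [abs_branch_sub hm hw hs ht, abs_branch_sub hm hw le_rfl ht, abs_of_nonneg (sub_nonneg.2 hst),
    sub_zero, abs_of_nonneg ht, mul_div_assoc', mul_div_assoc', mul_comm t]
  have h0 := branchDen_pos hm hw le_rfl (w := w)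
  have ht' := branchDen_pos hm hw ht (w := w)
  gcongr
  exact branchDen_mono hm hw hs

lemma continuousOn_branch (hm : 0 < m) (hw : ∀ i, 0 < w i) :
    ContinuousOn (branch m n w) (Ici 0) := by
  refine ContinuousOn.congr ?_ fun z hz => branch_eq_div hm hw hz
  refine ContinuousOn.div (by fun_prop) (by unfold branchDen; fun_prop) fun z hz => ?_
  exact (branchDen_pos hm hw hz).ne'

end BranchMatrix

lemma measurable_T : Measurable (T m) := by
  refine Measurable.ite (measurableSet_singleton 0) measurable_const ?_
  exact (measurable_const.div measurable_id).sub
    (measurable_const.mul (measurable_from_top.comp (Nat.measurable_floor.comp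
      (measurable_const.div (measurable_id.mul_const _)))))

lemma measurable_a (n : ℕ) : Measurable (a m n) :=
  Nat.measurable_floor.comp (measurable_const.div ((measurable_T.iterate _).mul_const _))

lemma measurableSet_digits_preimage_singleton (n : ℕ) (w : Fin n → ℕ) :
    MeasurableSet (digits m n ⁻¹' {w}) := by
  have : digits m n ⁻¹' {w} = ⋂ i : Fin n, a m (i + 1) ⁻¹' {w i} := by
    ext x; simp [digits, funext_iff]
  exact this ▸ MeasurableSet.iInter fun i => measurable_a _ (measurableSet_singleton _)

section Fibers

variable {α β : Type*} [MeasurableSpace α] [Countable β] {μ : Measure α} {f : α → β}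

lemma measure_inter_preimage_eq_tsum (hf : ∀ b, MeasurableSet (f ⁻¹' {b})) (E : Set α)
    (S : Set β) : μ (E ∩ f ⁻¹' S) = ∑' b : S, μ (E ∩ f ⁻¹' {(b : β)}) := by
  have hS : MeasurableSet (f ⁻¹' S) := by
    rw [← biUnion_preimage_singleton]
    exact MeasurableSet.biUnion S.to_countable fun b _ => hf b
  rw [inter_comm, ← Measure.restrict_apply hS,
    ← tsum_measure_preimage_singleton S.to_countable fun b _ => hf b]
  simp only [Measure.restrict_apply (hf _), inter_comm]

lemma measure_inter_preimage_le_of_forall (hf : ∀ b, MeasurableSet (f ⁻¹' {b})) {E F : Set α}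
    {c : ℝ≥0∞} (h : ∀ b, μ (E ∩ f ⁻¹' {b}) ≤ c * μ (F ∩ f ⁻¹' {b})) (S : Set β) :
    μ (E ∩ f ⁻¹' S) ≤ c * μ (F ∩ f ⁻¹' S) := by
  rw [measure_inter_preimage_eq_tsum hf, measure_inter_preimage_eq_tsum hf, ← ENNReal.tsum_mul_left]
  exact ENNReal.tsum_le_tsum fun b => h b

end Fibers

section Cylinder

variable {n : ℕ} {w : Fin n → ℕ}

lemma lt_of_a_one_le (hm : 0 < m) {z : ℝ} (hz : 0 < z) {K : ℕ} (hK : a m 1 z ≤ K) :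
    1 / ((K + 1) * th m) < z := by
  have hθ := th_pos hm
  have h : 1 / (z * th m) < K + 1 := by
    rw [a_one] at hK
    exact_mod_cast (Nat.floor_lt (by positivity)).1 (Nat.lt_succ_of_le hK)
  rw [div_lt_iff₀ (by positivity)] at h ⊢
  linarith

lemma uIoo_subset_image_branch (hm : 0 < m) (hw : ∀ i, 0 < w i) :
    uIoo (branch m n w 0) (branch m n w (th m)) ⊆ branch m n w '' Ioo 0 (th m) := by
  have hc : ContinuousOn (branch m n w) (Icc 0 (th m)) :=
    (continuousOn_branch hm hw).mono Icc_subset_Ici_self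
  rcases le_total (branch m n w 0) (branch m n w (th m)) with h | h
  · rw [uIoo_of_le h]; exact intermediate_value_Ioo (th_pos hm).le hc
  · rw [uIoo_of_ge h]; exact intermediate_value_Ioo' (th_pos hm).le hc

/-- Up to the null set `Ioo 0 θ \ nonEscaping m`, the cylinder of `w` is the interval spanned
by `branch m n w`. -/
lemma ofReal_le_volume_cylinder (hm : 0 < m) (hw : ∀ i, m ≤ w i) :
    ENNReal.ofReal |branch m n w (th m) - branch m n w 0| ≤
      volume (nonEscaping m ∩ digits m n ⁻¹' {w}) := by
  have hspan := uIoo_subset_image_branch hm fun i => hm.trans_le (hw i)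
  have hIoo : uIoo (branch m n w 0) (branch m n w (th m)) ⊆ Ioo 0 (th m) :=
    hspan.trans (image_subset_iff.2 fun z hz => branch_mem_Ioo hm hw hz)
  calc ENNReal.ofReal |branch m n w (th m) - branch m n w 0|
      = volume (uIoo (branch m n w 0) (branch m n w (th m))) := Real.volume_uIoo.symm
    _ = volume (nonEscaping m ∩ uIoo (branch m n w 0) (branch m n w (th m))) := by
      rw [measure_congr (ae_eq_set_inter (nonEscaping_ae_eq_Ioo hm) (ae_eq_refl (uIoo _ _))),
        inter_eq_right.2 hIoo]
    _ ≤ volume (nonEscaping m ∩ digits m n ⁻¹' {w}) := by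
      refine measure_mono (inter_subset_inter_right _ fun y hy => ?_)
      obtain ⟨z, hz, rfl⟩ := hspan hy
      exact digits_branch hm hw hz

lemma mem_uIcc_of_a_le (hm : 0 < m) {K : ℕ} {x : ℝ}
    (hx : x ∈ nonEscaping m ∩ {x | a m (n + 1) x ≤ K} ∩ digits m n ⁻¹' {w}) :
    x ∈ uIcc (branch m n w (1 / ((K + 1) * th m))) (branch m n w (th m)) := by
  obtain ⟨⟨hesc, hK⟩, hdig⟩ := hx
  have hdig : digits m n x = w := hdig
  have hw : ∀ i, 0 < w i := fun i => hdig ▸ hm.trans_le (le_a_of_mem_nonEscaping hm hesc i)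
  have hs := lt_of_a_one_le hm (hesc n).1 hK
  have hx := branch_digits_of_mem_nonEscaping hesc n
  rw [hdig] at hx
  rw [← hx]
  exact branch_mem_uIcc hm hw (by have := th_pos hm; positivity) ⟨hs.le, (hesc n).2.le⟩

lemma abs_branch_sub_le (hm : 0 < m) (hw : ∀ i, 0 < w i) {K : ℕ} (hK : m ≤ K + 1) :
    |branch m n w (th m) - branch m n w (1 / ((K + 1) * th m))| ≤
      (1 - m / (K + 1)) * |branch m n w (th m) - branch m n w 0| := by
  have hθ := th_pos hm
  have hK' : (m : ℝ) ≤ K + 1 := by exact_mod_cast hK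
  have hs : 1 / ((K + 1) * th m) ≤ th m := by
    rw [div_le_iff₀ (by positivity)]
    nlinarith [natCast_mul_th_mul_th hm]
  have hratio : (th m - 1 / ((K + 1) * th m)) / th m = 1 - m / (K + 1) := by
    have := natCast_mul_th_mul_th hm
    field_simp
    linear_combination this
  rw [← hratio, div_mul_eq_mul_div, le_div_iff₀ hθ, mul_comm]
  exact mul_abs_branch_sub_le hm hw (by positivity) hs

/-- `ENNReal.ofReal` clamps the factor at `0` when `K < m`, where the left-hand set is empty. -/
lemma volume_inter_a_le (hm : 0 < m) (w : Fin n → ℕ) (K : ℕ) :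
    volume (nonEscaping m ∩ {x | a m (n + 1) x ≤ K} ∩ digits m n ⁻¹' {w}) ≤
      ENNReal.ofReal (1 - m / (K + 1)) * volume (nonEscaping m ∩ digits m n ⁻¹' {w}) := by
  rcases (nonEscaping m ∩ {x | a m (n + 1) x ≤ K} ∩ digits m n ⁻¹' {w}).eq_empty_or_nonempty
    with h | ⟨x, ⟨hesc, hK⟩, hdig⟩
  · simp [h]
  have hdig : digits m n x = w := hdig
  have hw : ∀ i, m ≤ w i := fun i => hdig ▸ le_a_of_mem_nonEscaping hm hesc i
  have hK : m ≤ K + 1 := (le_a_of_mem_nonEscaping hm hesc n).trans hK |>.trans K.le_succ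
  have hK' : (0 : ℝ) ≤ 1 - m / (K + 1) := by
    rw [sub_nonneg, div_le_one (by positivity)]; exact_mod_cast hK
  calc volume (nonEscaping m ∩ {x | a m (n + 1) x ≤ K} ∩ digits m n ⁻¹' {w})
      ≤ volume (uIcc (branch m n w (1 / ((K + 1) * th m))) (branch m n w (th m))) :=
        measure_mono fun y hy => mem_uIcc_of_a_le hm hy
    _ = ENNReal.ofReal |branch m n w (th m) - branch m n w (1 / ((K + 1) * th m))| :=
        Real.volume_interval
    _ ≤ ENNReal.ofReal ((1 - m / (K + 1)) * |branch m n w (th m) - branch m n w 0|) :=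
        ENNReal.ofReal_le_ofReal (abs_branch_sub_le hm (fun i => hm.trans_le (hw i)) hK)
    _ ≤ ENNReal.ofReal (1 - m / (K + 1)) * volume (nonEscaping m ∩ digits m n ⁻¹' {w}) := by
        rw [ENNReal.ofReal_mul hK']
        gcongr
        exact ofReal_le_volume_cylinder hm hw

end Cylinder

lemma prod_ofReal_one_sub_le {ι : Type*} (s : Finset ι) (x : ι → ℝ) :
    ∏ j ∈ s, ENNReal.ofReal (1 - x j) ≤ ENNReal.ofReal (Real.exp (-∑ j ∈ s, x j)) := by
  rw [← Finset.sum_neg_distrib, Real.exp_sum,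
    ENNReal.ofReal_prod_of_nonneg fun j _ => (Real.exp_pos _).le]
  exact Finset.prod_le_prod' fun j _ =>
    ENNReal.ofReal_le_ofReal (by linarith [Real.add_one_le_exp (-x j)])

lemma tendsto_sum_Ico_atTop {x : ℕ → ℝ} (hx : ∀ j, 0 ≤ x j) (hs : ¬Summable x) (N : ℕ) :
    Tendsto (fun n => ∑ j ∈ Finset.Ico N n, x j) atTop atTop := by
  refine (tendsto_atTop_add_const_right _ (-∑ j ∈ Finset.range N, x j)
    ((not_summable_iff_tendsto_nat_atTop_of_nonneg hx).1 hs)).congr' ?_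
  filter_upwards [eventually_ge_atTop N] with n hn
  rw [Finset.sum_Ico_eq_sub _ hn, sub_eq_add_neg]

lemma summable_one_div_of_summable_div_floor (hm : 0 < m) {φ : ℕ → ℝ}
    (h : Summable fun j => (m : ℝ) / (⌊φ j⌋₊ + 1)) : Summable fun j => 1 / φ j := by
  -- once the terms are below `1`, `⌊φ j⌋₊ ≥ m ≥ 1`, so that `1 / φ j ≤ 2 / (⌊φ j⌋₊ + 1)`
  refine (h.mul_left 2).of_norm_bounded_eventually_nat ?_
  filter_upwards [h.tendsto_atTop_zero.eventually (gt_mem_nhds one_pos)] with j hj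
  have hfloor : m < ⌊φ j⌋₊ + 1 := by
    rw [div_lt_one (by positivity)] at hj
    exact_mod_cast hj
  have hφ : 1 ≤ φ j := Nat.floor_pos.1 (by omega)
  have hφ' : (⌊φ j⌋₊ : ℝ) + 1 ≤ 2 * φ j := by linarith [Nat.floor_le (zero_le_one.trans hφ)]
  have hm' : (1 : ℝ) ≤ m := by exact_mod_cast hm
  rw [Real.norm_of_nonneg (by positivity), div_le_iff₀ (by positivity), mul_div_assoc',
    div_mul_eq_mul_div, le_div_iff₀ (by positivity)]
  nlinarith

def boundedDigits (m : ℕ) (K : ℕ → ℕ) (N n : ℕ) : Set ℝ :=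
  {x | x ∈ nonEscaping m ∧ ∀ j ∈ Finset.Ico N n, a m (j + 1) x ≤ K j}

section BoundedDigits

variable {K : ℕ → ℕ} {N n : ℕ}

lemma boundedDigits_eq_inter_preimage :
    boundedDigits m K N n =
      nonEscaping m ∩ digits m n ⁻¹' {w | ∀ i : Fin n, N ≤ i → w i ≤ K i} := by
  ext x
  simp only [boundedDigits, digits, Fin.forall_iff, Finset.mem_Ico, and_imp, mem_inter_iff,
    mem_preimage, mem_ofPred_eq]
  exact and_congr_right fun _ => ⟨fun h j hj hN => h j hN hj, fun h j hN hj => h j hj hN⟩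

lemma boundedDigits_succ (h : N ≤ n) :
    boundedDigits m K N (n + 1) =
      nonEscaping m ∩ {x | a m (n + 1) x ≤ K n} ∩
        digits m n ⁻¹' {w | ∀ i : Fin n, N ≤ i → w i ≤ K i} := by
  rw [inter_right_comm, ← boundedDigits_eq_inter_preimage]
  ext x
  simp only [boundedDigits, Nat.Ico_succ_right_eq_insert_Ico h, Finset.forall_mem_insert,
    mem_inter_iff, mem_ofPred_eq]
  tauto

lemma volume_boundedDigits_le (hm : 0 < m) (h : N ≤ n) :
    volume (boundedDigits m K N n) ≤
      ENNReal.ofReal (th m) * ∏ j ∈ Finset.Ico N n, ENNReal.ofReal (1 - m / (K j + 1)) := by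
  induction n, h using Nat.le_induction with
  | base =>
    rw [Finset.Ico_self, Finset.prod_empty, mul_one, ← sub_zero (th m), ← Real.volume_Ioo]
    exact measure_mono fun x hx => nonEscaping_subset_Ioo hx.1
  | succ n hn ih =>
    rw [boundedDigits_succ hn]
    refine (measure_inter_preimage_le_of_forall (measurableSet_digits_preimage_singleton n)
      (fun w => volume_inter_a_le hm w (K n)) _).trans ?_
    rw [← boundedDigits_eq_inter_preimage, Finset.prod_Ico_succ_top hn,
      mul_comm _ (ENNReal.ofReal _), mul_left_comm]
    gcongr

lemma volume_iInter_boundedDigits (hm : 0 < m) (hK : ¬Summable fun j => (m : ℝ) / (K j + 1))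
    (N : ℕ) : volume (⋂ n, boundedDigits m K N n) = 0 := by
  set S := fun n => ∑ j ∈ Finset.Ico N n, (m : ℝ) / (K j + 1)
  have hlim : Tendsto (fun n => ENNReal.ofReal (th m * Real.exp (-S n))) atTop (nhds 0) := by
    have := (Real.tendsto_exp_atBot.comp (tendsto_neg_atTop_atBot.comp
      (tendsto_sum_Ico_atTop (fun j => by positivity) hK N))).const_mul (th m)
    rw [mul_zero] at this
    simpa using ENNReal.tendsto_ofReal this
  refine le_antisymm (ge_of_tendsto hlim ?_) bot_le
  filter_upwards [eventually_ge_atTop N] with n hn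
  calc volume (⋂ n, boundedDigits m K N n)
      ≤ volume (boundedDigits m K N n) := measure_mono (iInter_subset _ n)
    _ ≤ ENNReal.ofReal (th m) * ∏ j ∈ Finset.Ico N n, ENNReal.ofReal (1 - m / (K j + 1)) :=
      volume_boundedDigits_le hm hn
    _ ≤ ENNReal.ofReal (th m) * ENNReal.ofReal (Real.exp (-S n)) := by
      gcongr; exact prod_ofReal_one_sub_le _ _
    _ = ENNReal.ofReal (th m * Real.exp (-S n)) := (ENNReal.ofReal_mul (th_pos hm).le).symm

lemma mem_iUnion_iInter_boundedDigits {φ : ℕ → ℝ} {x : ℝ} (hx : x ∈ nonEscaping m)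
    (hfin : {n : ℕ | 1 ≤ n ∧ φ n < (a m n x : ℝ)}.Finite) :
    x ∈ ⋃ N, ⋂ n, boundedDigits m (fun j => ⌊φ (j + 1)⌋₊) N n := by
  obtain ⟨N, hN⟩ := hfin.bddAbove
  refine mem_iUnion.2 ⟨N, mem_iInter.2 fun n =>
    ⟨hx, fun j hj => Nat.le_floor (not_lt.1 fun h => ?_)⟩⟩
  have := hN ⟨j.succ_pos, h⟩
  have := (Finset.mem_Ico.1 hj).1
  omega

end BoundedDigits

theorem stmt_9_general (m : ℕ) (hm : 2 ≤ m) (φ : ℕ → ℝ)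
    (hs : ¬ Summable fun n : ℕ => 1 / φ (n + 1)) :
    lam m {x | x ∈ Omega m ∧ {n : ℕ | 1 ≤ n ∧ φ n < (a m n x : ℝ)}.Infinite} = 1 := by
  have hm₀ : 0 < m := by omega
  set A := {x | x ∈ Omega m ∧ {n : ℕ | 1 ≤ n ∧ φ n < (a m n x : ℝ)}.Infinite}
  have hbad : Ioo 0 (th m) \ A ⊆ (Ioo 0 (th m) \ nonEscaping m) ∪ range ((↑) : ℚ → ℝ) ∪
      ⋃ N, ⋂ n, boundedDigits m (fun j => ⌊φ (j + 1)⌋₊) N n := by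
    rintro x ⟨hx, hxA⟩
    by_contra! hgood
    simp only [mem_union, not_or] at hgood
    obtain ⟨⟨hesc, hirr⟩, hbdd⟩ := hgood
    exact hbdd (mem_iUnion_iInter_boundedDigits (not_not.1 fun h => hesc ⟨hx, h⟩)
      (Set.not_infinite.1 fun hinf => hxA ⟨⟨hx, hirr⟩, hinf⟩))
  have hnull : volume (Ioo 0 (th m) \ A) = 0 := by
    refine measure_mono_null hbad (measure_union_null (measure_union_null ?_ ?_) ?_)
    · exact (ae_eq_set.1 (nonEscaping_ae_eq_Ioo hm₀)).2
    · exact (countable_range _).measure_zero _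
    · exact measure_iUnion_null fun N => volume_iInter_boundedDigits hm₀
        (fun h => hs (summable_one_div_of_summable_div_floor hm₀ h)) N
  have hA : volume A = ENNReal.ofReal (th m) := by
    rw [measure_eq_measure_of_null_sdiff (fun x hx => hx.1.1) hnull, Real.volume_Ioo, sub_zero]
  rw [lam, hA, ENNReal.toReal_ofReal (th_pos hm₀).le, div_self (th_pos hm₀).ne']

/-- Borel–Bernstein, divergence part: if ∑ 1/φ(n) = ∞ then
λ_θ({x ∈ Ω : a_n(x) > φ(n) i.o.}) = 1. -/
theorem stmt_9 (m : ℕ) (hm : 2 ≤ m) (φ : ℕ → ℝ) (hφ : ∀ n, 1 ≤ n → 0 < φ n)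
    (hs : ¬ Summable fun n : ℕ => 1 / φ (n + 1)) :
    lam m {x | x ∈ Omega m ∧ {n : ℕ | 1 ≤ n ∧ φ n < (a m n x : ℝ)}.Infinite} = 1 :=
  stmt_9_general m hm φ hs

end Theta
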